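/- Fix p ∈ (0,1) with p ≠ 1/2, and let α = 1/(p^p (1−p)^{1−p}). Consider the Markov chain (X_t) on {0,1}^n in which X_{t+1} is obtained from X_t by flipping each bit independently with probability p (every offspring is accepted and no state is absorbing). Let T_S be the first time t ≥ 1 with X_t ∈ ⋃_{k=1}^N S_k, the union of the stepping stones of DistantSteppingStones_p. Then there is a constant C such that for all n and every starting state X_0 = x ∈ {0,1}^n, E[T_S] ≤ C · α^n. -/

import Mathlib

open Finset
open scoped Classical

namespace DSS

/-- Number of ones of a bit string. -/
def ones {n : ℕ} (x : Fin n → Bool) : ℕ := (Finset.univ.filter fun i => x i = true).card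

/-- Hamming distance between two bit strings. -/
def hamming {n : ℕ} (x y : Fin n → Bool) : ℕ := (Finset.univ.filter fun i => x i ≠ y i).card

/-- The all-ones string. -/
def allOnes (n : ℕ) : Fin n → Bool := fun _ => true

/-- Probability that mutating `x` (flipping each bit independently with probability `q`)
produces exactly `y`. -/
noncomputable def flipProb {n : ℕ} (q : ℝ) (x y : Fin n → Bool) : ℝ :=
  q ^ hamming x y * (1 - q) ^ (n - hamming x y)

/-- Probability that the offspring of `x` under mutation rate `q` lies in the set `E`. -/
noncomputable def mutProb {n : ℕ} (q : ℝ) (x : Fin n → Bool) (E : Set (Fin n → Bool)) : ℝ :=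
  ∑ y : Fin n → Bool, if y ∈ E then flipProb q x y else 0

/-- One-step transition probability of the (1+1) EA on fitness `f` with mutation rate `q`. -/
noncomputable def eaStep {n : ℕ} (f : (Fin n → Bool) → ℝ) (q : ℝ) (x y : Fin n → Bool) : ℝ :=
  (if f x ≤ f y then flipProb q x y else 0) +
    (if y = x then ∑ z : Fin n → Bool, if f z < f x then flipProb q x z else 0 else 0)

/-- Sub-probability mass of the (1+1) EA chain killed upon entering `A`, starting from the
initial mass function `μ0`: `eaKilled f q A μ0 t y` is the probability that the chain has
avoided `A` at all times `0,…,t` and is at `y` at time `t`. -/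
noncomputable def eaKilled {n : ℕ} (f : (Fin n → Bool) → ℝ) (q : ℝ)
    (A : Set (Fin n → Bool)) (μ0 : (Fin n → Bool) → ℝ) : ℕ → (Fin n → Bool) → ℝ
  | 0, y => if y ∈ A then 0 else μ0 y
  | t + 1, y => if y ∈ A then 0
      else ∑ x : Fin n → Bool, eaKilled f q A μ0 t x * eaStep f q x y

/-- The uniform distribution on bit strings. -/
noncomputable def uniform (n : ℕ) : (Fin n → Bool) → ℝ := fun _ => (1 : ℝ) / 2 ^ n

/-- Expected hitting time of the set `A` for the (1+1) EA on `f` with mutation rate `q` and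
initial distribution `μ0`, via `E[T] = ∑_{t ≥ 0} P(T > t)`. -/
noncomputable def eaHitTime {n : ℕ} (f : (Fin n → Bool) → ℝ) (q : ℝ)
    (A : Set (Fin n → Bool)) (μ0 : (Fin n → Bool) → ℝ) : ℝ :=
  ∑' t : ℕ, ∑ y : Fin n → Bool, eaKilled f q A μ0 t y

/-- The set of global maxima of a fitness function. -/
def maxSet {n : ℕ} (f : (Fin n → Bool) → ℝ) : Set (Fin n → Bool) := {x | ∀ y, f y ≤ f x}

/-- Expected runtime `E[T(q)]` of the (1+1) EA on `f` with mutation rate `q`: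
the expectation of the least `t ≥ 0` such that `X_t` is a global maximum of `f`,
started from the uniform distribution. -/
noncomputable def expectedRuntime {n : ℕ} (f : (Fin n → Bool) → ℝ) (q : ℝ) : ℝ :=
  eaHitTime f q (maxSet f) (uniform n)

/-- The map `f_p(x) = p(1-x) + (1-p)x`. -/
noncomputable def fp (p : ℝ) (x : ℝ) : ℝ := p * (1 - x) + (1 - p) * x

/-- `s p k = f_p^{(k)}(1)`. -/
noncomputable def s (p : ℝ) (k : ℕ) : ℝ := (fp p)^[k] 1

/-- `N(n)`: the least `k ≥ 1` with `⌊n s_k⌋ = ⌊n/2⌋`. -/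
noncomputable def NN (p : ℝ) (n : ℕ) : ℕ :=
  sInf {k : ℕ | 1 ≤ k ∧ ⌊(n : ℝ) * s p k⌋ = ⌊(n : ℝ) / 2⌋}

/-- `x ∈ S_k`, i.e. the number of ones of `x` is `⌊n s_k⌋`. -/
def inStone (p : ℝ) {n : ℕ} (k : ℕ) (x : Fin n → Bool) : Prop :=
  (ones x : ℤ) = ⌊(n : ℝ) * s p k⌋

/-- The fitness function `DistantSteppingStones_p`: value `N + 1 - k` on `S_k`
(for the least such `k ≤ N`), and `0` elsewhere. -/
noncomputable def dss (p : ℝ) (n : ℕ) (x : Fin n → Bool) : ℝ :=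
  if ∃ k ≤ NN p n, inStone p k x
  then ((NN p n + 1 - sInf {k : ℕ | k ≤ NN p n ∧ inStone p k x} : ℕ) : ℝ)
  else 0

/-- The union of the stepping stones `S_1, …, S_N`. -/
def stones (p : ℝ) (n : ℕ) : Set (Fin n → Bool) :=
  {x | ∃ k, 1 ≤ k ∧ k ≤ NN p n ∧ inStone p k x}

/-- Sub-probability mass of the pure mutation chain (every offspring accepted) killed upon
entering `A` at times `t ≥ 1`, started at `x0`. -/
noncomputable def pureKilled {n : ℕ} (q : ℝ) (A : Set (Fin n → Bool)) (x0 : Fin n → Bool) :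
    ℕ → (Fin n → Bool) → ℝ
  | 0, y => if y = x0 then 1 else 0
  | t + 1, y => if y ∈ A then 0
      else ∑ x : Fin n → Bool, pureKilled q A x0 t x * flipProb q x y

/-- Expected value of the first time `t ≥ 1` at which the pure mutation chain started at
`x0` lies in `A`, via `E[T] = ∑_{t ≥ 0} P(T > t)`. -/
noncomputable def pureHitTime {n : ℕ} (q : ℝ) (A : Set (Fin n → Bool)) (x0 : Fin n → Bool) : ℝ :=
  ∑' t : ℕ, ∑ y : Fin n → Bool, pureKilled q A x0 t y

/-- Probability that the (1+1) EA on `f` with mutation rate `q`, started uniformly at random,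
visits the set `B` strictly before the set `A`. -/
noncomputable def reachBeforeProb {n : ℕ} (f : (Fin n → Bool) → ℝ) (q : ℝ)
    (A B : Set (Fin n → Bool)) : ℝ :=
  (∑ y : Fin n → Bool, if y ∈ B then uniform n y else 0) +
    ∑' t : ℕ, ∑ x : Fin n → Bool, eaKilled f q (A ∪ B) (uniform n) t x *
      ∑ y : Fin n → Bool, if y ∈ B then eaStep f q x y else 0

/-- Probability that, within the next `M` iterations of the (1+1) EA on `f` with mutation
rate `q` started at the current individual `x`, some produced offspring (accepted or not)
lies in `G`. -/
noncomputable def offspringReach {n : ℕ} (f : (Fin n → Bool) → ℝ) (q : ℝ)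
    (G : Set (Fin n → Bool)) : ℕ → (Fin n → Bool) → ℝ
  | 0, _ => 0
  | M + 1, x => ∑ y : Fin n → Bool,
      flipProb q x y *
        (if y ∈ G then 1 else offspringReach f q G M (if f x ≤ f y then y else x))


/-!
From a string with `a` ones, one mutation lands with probability at least `1 / (n + 1) ^ 2` on the
level `modeLevel p n a` reached by flipping the modal numbers of ones and of zeros, and these
levels approach `n / 2` geometrically, with ratio `|1 - 2p|`, up to a bounded error. So after a
constant number `K` of such steps the level is within `ε n` of `n / 2`, and since binomial
probabilities drop by at most a factor `2` per unit of distance from the mode, one more mutation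
hits the middle level `⌊n / 2⌋ ⊆ S_N` with probability at least `2 ^ (-ε n) / (n + 1) ^ 2`.
Every window of `K + 1` steps therefore hits the stepping stones with probability
`δ ≥ 2 ^ (-ε n) / (n + 1) ^ (2 (K + 1))`, whence `E[T] ≤ (K + 1) / δ = O(α ^ n)` as soon as
`2 ^ ε < α`; small `n` are covered by the one-step bound `min(p, 1 - p) ^ n`.
-/

open Filter

lemma pow_mul_le_of_mul_le_succ {f : ℕ → ℝ} {r : ℝ} (hr : 0 ≤ r) {a : ℕ} :
    ∀ s, (∀ k, a ≤ k → k < a + s → r * f k ≤ f (k + 1)) → r ^ s * f a ≤ f (a + s)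
  | 0, _ => by simp
  | s + 1, h => calc
      r ^ (s + 1) * f a = r * (r ^ s * f a) := by ring
      _ ≤ r * f (a + s) :=
        mul_le_mul_of_nonneg_left (pow_mul_le_of_mul_le_succ hr s fun k hk hks => h k hk (by omega)) hr
      _ ≤ f (a + (s + 1)) := h _ le_self_add (by omega)

lemma pow_mul_le_of_mul_succ_le {f : ℕ → ℝ} {r : ℝ} (hr : 0 ≤ r) {a : ℕ} :
    ∀ s, (∀ k, a ≤ k → k < a + s → r * f (k + 1) ≤ f k) → r ^ s * f (a + s) ≤ f a
  | 0, _ => by simp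
  | s + 1, h => calc
      r ^ (s + 1) * f (a + (s + 1)) = r ^ s * (r * f (a + s + 1)) := by ring_nf
      _ ≤ r ^ s * f (a + s) := mul_le_mul_of_nonneg_left (h _ le_self_add (by omega)) (pow_nonneg hr s)
      _ ≤ f a := pow_mul_le_of_mul_succ_le hr s fun k hk hks => h k hk (by omega)

lemma le_pow_mul_add_of_le_mul_add_one {u : ℕ → ℝ} {θ : ℝ} (hθ0 : 0 ≤ θ) (hθ1 : θ < 1)
    (h : ∀ k, u (k + 1) ≤ θ * u k + 1) : ∀ k, u k ≤ θ ^ k * u 0 + 1 / (1 - θ)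
  | 0 => by simpa using (one_div_pos.2 (sub_pos.2 hθ1)).le
  | k + 1 => calc
      u (k + 1) ≤ θ * u k + 1 := h k
      _ ≤ θ * (θ ^ k * u 0 + 1 / (1 - θ)) + 1 := by
        gcongr
        exact le_pow_mul_add_of_le_mul_add_one hθ0 hθ1 h k
      _ = θ ^ (k + 1) * u 0 + 1 / (1 - θ) := by
        field_simp [(sub_pos.2 hθ1).ne']
        ring

lemma abs_natCast_div_two_sub_le (n : ℕ) : |((n / 2 : ℕ) : ℝ) - n / 2| ≤ 1 / 2 := by
  have h1 : ((n / 2 : ℕ) : ℝ) * 2 ≤ n := by exact_mod_cast Nat.div_mul_le_self n 2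
  have h2 : (n : ℝ) ≤ (n / 2 : ℕ) * 2 + 1 := by exact_mod_cast (by omega : n ≤ n / 2 * 2 + 1)
  exact abs_le.2 ⟨by linarith, by linarith⟩

noncomputable def binom (p : ℝ) (m k : ℕ) : ℝ := m.choose k * p ^ k * (1 - p) ^ (m - k)

section Binomial

variable {p : ℝ}

lemma binom_nonneg (hp0 : 0 ≤ p) (hp1 : p ≤ 1) (m k : ℕ) : 0 ≤ binom p m k := by
  have := sub_nonneg.2 hp1
  unfold binom
  positivity

lemma sum_binom (p : ℝ) (m : ℕ) : ∑ k ∈ range (m + 1), binom p m k = 1 := by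
  simpa [binom, mul_comm, mul_left_comm, mul_assoc] using (add_pow p (1 - p) m).symm

lemma binom_succ_mul (p : ℝ) {m k : ℕ} (hk : k < m) :
    binom p m (k + 1) * ((1 - p) * (k + 1)) = binom p m k * (p * (m - k)) := by
  have hchoose : (m.choose (k + 1) : ℝ) * (k + 1) = m.choose k * (m - k) := by
    rw [← Nat.cast_sub hk.le]
    exact_mod_cast Nat.choose_succ_right_eq m k
  obtain ⟨r, rfl⟩ : ∃ r, m = k + 1 + r := ⟨m - (k + 1), by omega⟩
  rw [binom, binom, show k + 1 + r - k = r + 1 by omega, Nat.add_sub_cancel_left]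
  linear_combination p ^ (k + 1) * (1 - p) ^ (r + 1) * hchoose

noncomputable def binomMode (p : ℝ) (m : ℕ) : ℕ := ⌊(m + 1) * p⌋₊

lemma binomMode_le_mul (hp0 : 0 ≤ p) (m : ℕ) : (binomMode p m : ℝ) ≤ (m + 1) * p :=
  Nat.floor_le (by positivity)

lemma mul_lt_binomMode_add_one (p : ℝ) (m : ℕ) : (m + 1) * p < binomMode p m + 1 :=
  Nat.lt_floor_add_one _

lemma binomMode_le (hp0 : 0 ≤ p) (hp1 : p < 1) (m : ℕ) : binomMode p m ≤ m := by
  have h := binomMode_le_mul hp0 m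
  have : (binomMode p m : ℝ) < m + 1 := by nlinarith
  exact Nat.lt_succ_iff.1 (by exact_mod_cast this)

lemma mul_binom_le_binom_succ (hp0 : 0 ≤ p) (hp1 : p < 1) {m k : ℕ} (hk : k < m) {r : ℝ}
    (h : r * ((1 - p) * (k + 1)) ≤ p * (m - k)) : r * binom p m k ≤ binom p m (k + 1) := by
  have hc : 0 < (1 - p) * (k + 1) := mul_pos (sub_pos.2 hp1) k.cast_add_one_pos
  refine le_of_mul_le_mul_right ?_ hc
  calc r * binom p m k * ((1 - p) * (k + 1)) = binom p m k * (r * ((1 - p) * (k + 1))) := by ring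
    _ ≤ binom p m k * (p * (m - k)) :=
      mul_le_mul_of_nonneg_left h (binom_nonneg hp0 hp1.le m k)
    _ = binom p m (k + 1) * ((1 - p) * (k + 1)) := (binom_succ_mul p hk).symm

lemma mul_binom_succ_le_binom (hp0 : 0 < p) (hp1 : p < 1) {m k : ℕ} (hk : k < m) {r : ℝ}
    (h : r * (p * (m - k)) ≤ (1 - p) * (k + 1)) : r * binom p m (k + 1) ≤ binom p m k := by
  have hd : 0 < p * (m - k) := mul_pos hp0 (sub_pos.2 (by exact_mod_cast hk))
  refine le_of_mul_le_mul_right ?_ hd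
  calc r * binom p m (k + 1) * (p * (m - k)) = binom p m (k + 1) * (r * (p * (m - k))) := by ring
    _ ≤ binom p m (k + 1) * ((1 - p) * (k + 1)) :=
      mul_le_mul_of_nonneg_left h (binom_nonneg hp0.le hp1.le m (k + 1))
    _ = binom p m k * (p * (m - k)) := binom_succ_mul p hk

lemma binom_le_binom_binomMode (hp0 : 0 < p) (hp1 : p < 1) {m k : ℕ} (hk : k ≤ m) :
    binom p m k ≤ binom p m (binomMode p m) := by
  have hM := binomMode_le hp0.le hp1 m
  have hM_le := binomMode_le_mul hp0.le m
  have hM_gt := mul_lt_binomMode_add_one p m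
  rcases le_total k (binomMode p m) with hkM | hMk
  · have h := pow_mul_le_of_mul_le_succ zero_le_one (f := binom p m) (a := k) (binomMode p m - k)
      fun i _ hi => mul_binom_le_binom_succ hp0.le hp1 (by omega) <| by
        have : (i : ℝ) + 1 ≤ binomMode p m := by exact_mod_cast (by omega : i + 1 ≤ binomMode p m)
        nlinarith
    rwa [one_pow, one_mul, Nat.add_sub_cancel' hkM] at h
  · have h := pow_mul_le_of_mul_succ_le zero_le_one (f := binom p m) (a := binomMode p m)
      (k - binomMode p m) fun i hi hik => mul_binom_succ_le_binom hp0 hp1 (by omega) <| by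
        have : (binomMode p m : ℝ) ≤ i := by exact_mod_cast hi
        nlinarith
    rwa [one_pow, one_mul, Nat.add_sub_cancel' hMk] at h

lemma one_div_le_binom_binomMode (hp0 : 0 < p) (hp1 : p < 1) (m : ℕ) :
    1 / (m + 1) ≤ binom p m (binomMode p m) := by
  have h := sum_le_card_nsmul (range (m + 1)) (binom p m) _ fun k hk =>
    binom_le_binom_binomMode hp0 hp1 (Nat.lt_succ_iff.1 (mem_range.1 hk))
  rw [sum_binom, card_range, nsmul_eq_mul] at h
  rw [div_le_iff₀ (by positivity)]
  push_cast at h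
  linarith

lemma binomMode_add_le (hp0 : 0 < p) (hp1 : p < 1) {m s : ℕ}
    (hs : 3 * s ≤ p * (1 - p) * (m + 1)) : binomMode p m + s ≤ m := by
  have := binomMode_le_mul hp0.le m
  have := mul_pos (mul_pos (sub_pos.2 hp1) m.cast_add_one_pos) (by linarith : (0 : ℝ) < 3 - p)
  have : (binomMode p m + s : ℝ) < m + 1 := by linarith
  exact Nat.lt_succ_iff.1 (by exact_mod_cast this)

lemma le_binomMode (hp0 : 0 < p) (hp1 : p < 1) {m s : ℕ}
    (hs : 3 * s ≤ p * (1 - p) * (m + 1)) : s ≤ binomMode p m := by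
  have := mul_lt_binomMode_add_one p m
  have := mul_nonneg (mul_nonneg hp0.le hp0.le) (m.cast_add_one_pos (α := ℝ)).le
  have : (s : ℝ) < binomMode p m + 1 := by nlinarith [(s.cast_nonneg : (0 : ℝ) ≤ s)]
  exact Nat.lt_succ_iff.1 (by exact_mod_cast this)

lemma binom_binomMode_add_ge (hp0 : 0 < p) (hp1 : p < 1) {m s : ℕ}
    (hs : 3 * s ≤ p * (1 - p) * (m + 1)) :
    (1 / 2) ^ s / (m + 1) ≤ binom p m (binomMode p m + s) := by
  have hM := binomMode_le_mul hp0.le m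
  have hsm := binomMode_add_le hp0 hp1 hs
  have h := pow_mul_le_of_mul_le_succ (by norm_num) (f := binom p m) (a := binomMode p m) s
    fun i _ hi => mul_binom_le_binom_succ (r := 1 / 2) hp0.le hp1 (by omega) <| by
      have hi' : (i : ℝ) + 1 ≤ binomMode p m + s := by exact_mod_cast hi
      nlinarith [mul_le_mul_of_nonneg_left hi' (by linarith : (0 : ℝ) ≤ 1 + p),
        mul_le_mul_of_nonneg_left hM (by linarith : (0 : ℝ) ≤ 1 + p),
        mul_nonneg (sub_nonneg.2 hp1.le) s.cast_nonneg]
  calc (1 / 2 : ℝ) ^ s / (m + 1) = (1 / 2) ^ s * (1 / (m + 1)) := by ring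
    _ ≤ (1 / 2) ^ s * binom p m (binomMode p m) :=
      mul_le_mul_of_nonneg_left (one_div_le_binom_binomMode hp0 hp1 m) (by positivity)
    _ ≤ _ := h

lemma binom_binomMode_sub_ge (hp0 : 0 < p) (hp1 : p < 1) {m s : ℕ}
    (hs : 3 * s ≤ p * (1 - p) * (m + 1)) :
    (1 / 2) ^ s / (m + 1) ≤ binom p m (binomMode p m - s) := by
  have hM := mul_lt_binomMode_add_one p m
  have hsM := le_binomMode hp0 hp1 hs
  have h := pow_mul_le_of_mul_succ_le (by norm_num) (f := binom p m) (a := binomMode p m - s) s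
    fun i hi hi' => mul_binom_succ_le_binom (r := 1 / 2) hp0 hp1
      (by have := binomMode_le hp0.le hp1 m; omega) <| by
      have hi'' : (m + 1) * p - s ≤ i + 1 := by
        have : ((binomMode p m - s : ℕ) : ℝ) ≤ i := by exact_mod_cast hi
        rw [Nat.cast_sub hsM] at this
        linarith
      nlinarith [mul_le_mul_of_nonneg_left hi'' (by linarith : (0 : ℝ) ≤ 2 - p),
        mul_nonneg hp0.le s.cast_nonneg]
  rw [Nat.sub_add_cancel hsM] at h
  calc (1 / 2 : ℝ) ^ s / (m + 1) = (1 / 2) ^ s * (1 / (m + 1)) := by ring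
    _ ≤ (1 / 2) ^ s * binom p m (binomMode p m) :=
      mul_le_mul_of_nonneg_left (one_div_le_binom_binomMode hp0 hp1 m) (by positivity)
    _ ≤ _ := h

lemma binom_ge_of_abs_sub_binomMode_le (hp0 : 0 < p) (hp1 : p < 1) {m k s : ℕ}
    (hk : |(k : ℝ) - binomMode p m| ≤ s) (hs : 3 * s ≤ p * (1 - p) * (m + 1)) :
    (1 / 2) ^ s / (m + 1) ≤ binom p m k := by
  have weaken : ∀ d : ℕ, (d : ℝ) ≤ s → (1 / 2 : ℝ) ^ d / (m + 1) ≤ binom p m k →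
      (1 / 2) ^ s / (m + 1) ≤ binom p m k := fun d hd h =>
    le_trans (div_le_div_of_nonneg_right (pow_le_pow_of_le_one (by norm_num) (by norm_num)
      (by exact_mod_cast hd)) (by positivity)) h
  rcases le_total k (binomMode p m) with hkM | hMk
  · have hd : ((binomMode p m - k : ℕ) : ℝ) ≤ s := by
      rw [Nat.cast_sub hkM]; linarith [neg_abs_le ((k : ℝ) - binomMode p m)]
    have h := binom_binomMode_sub_ge hp0 hp1 (m := m) (s := binomMode p m - k) (by linarith)
    rw [Nat.sub_sub_self hkM] at h
    exact weaken _ hd h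
  · have hd : ((k - binomMode p m : ℕ) : ℝ) ≤ s := by
      rw [Nat.cast_sub hMk]; linarith [le_abs_self ((k : ℝ) - binomMode p m)]
    have h := binom_binomMode_add_ge hp0 hp1 (m := m) (s := k - binomMode p m) (by linarith)
    rw [Nat.add_sub_cancel' hMk] at h
    exact weaken _ hd h

end Binomial

section Mutation

variable {n : ℕ}

def onesSet (x : Fin n → Bool) : Finset (Fin n) := univ.filter fun i => x i = true

def level (n c : ℕ) : Set (Fin n → Bool) := {y | ones y = c}

def flipSet (x : Fin n → Bool) (D : Finset (Fin n)) : Fin n → Bool :=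
  fun i => if i ∈ D then !x i else x i

lemma card_onesSet (x : Fin n → Bool) : (onesSet x).card = ones x := rfl

lemma ones_le (x : Fin n → Bool) : ones x ≤ n :=
  (card_le_univ (onesSet x)).trans_eq (Fintype.card_fin n)

lemma card_compl_onesSet (x : Fin n → Bool) : (onesSet x)ᶜ.card = n - ones x := by
  rw [card_compl, Fintype.card_fin, card_onesSet]

lemma filter_ne_flipSet (x : Fin n → Bool) (D : Finset (Fin n)) :
    univ.filter (fun i => x i ≠ flipSet x D i) = D := by
  ext i
  by_cases h : i ∈ D <;> simp [flipSet, h]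

lemma flipSet_injective (x : Fin n → Bool) : Function.Injective (flipSet x) := fun D D' h => by
  rw [← filter_ne_flipSet x D, ← filter_ne_flipSet x D', h]

lemma flipSet_union_injOn (x : Fin n → Bool) :
    Set.InjOn (fun ST : Finset (Fin n) × Finset (Fin n) => flipSet x (ST.1 ∪ ST.2))
      {ST | ST.1 ⊆ onesSet x ∧ Disjoint ST.2 (onesSet x)} := by
  have split : ∀ {S T : Finset (Fin n)}, S ⊆ onesSet x → Disjoint T (onesSet x) →
      (S ∪ T) ∩ onesSet x = S ∧ (S ∪ T) \ onesSet x = T := fun hS hT =>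
    ⟨by rw [union_inter_distrib_right, inter_eq_left.2 hS, disjoint_iff_inter_eq_empty.1 hT,
        union_empty],
      by rw [union_sdiff_distrib, sdiff_eq_empty_iff_subset.2 hS, hT.sdiff_eq_left, empty_union]⟩
  rintro ⟨S, T⟩ ⟨hS, hT⟩ ⟨S', T'⟩ ⟨hS', hT'⟩ h
  have hU : S ∪ T = S' ∪ T' := flipSet_injective x h
  obtain ⟨hS_eq, hT_eq⟩ := split hS hT
  rw [hU] at hS_eq hT_eq
  exact Prod.ext (hS_eq.symm.trans (split hS' hT').1) (hT_eq.symm.trans (split hS' hT').2)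

lemma flipProb_flipSet (q : ℝ) (x : Fin n → Bool) (D : Finset (Fin n)) :
    flipProb q x (flipSet x D) = q ^ D.card * (1 - q) ^ (n - D.card) := by
  rw [flipProb, hamming, filter_ne_flipSet]

lemma onesSet_flipSet_union {x : Fin n → Bool} {S T : Finset (Fin n)} (hS : S ⊆ onesSet x)
    (hT : Disjoint T (onesSet x)) : onesSet (flipSet x (S ∪ T)) = (onesSet x \ S) ∪ T := by
  ext i
  have hS' := @hS i
  have hT' : i ∈ T → i ∉ onesSet x := fun h => disjoint_left.1 hT h
  by_cases hiS : i ∈ S <;> by_cases hiT : i ∈ T <;> cases hx : x i <;>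
    simp_all [onesSet, flipSet]

lemma ones_flipSet_union {x : Fin n → Bool} {S T : Finset (Fin n)} (hS : S ⊆ onesSet x)
    (hT : Disjoint T (onesSet x)) : ones (flipSet x (S ∪ T)) = ones x - S.card + T.card := by
  rw [← card_onesSet, onesSet_flipSet_union hS hT,
    card_union_of_disjoint (hT.symm.mono_left sdiff_subset),
    card_sdiff_of_subset hS, card_onesSet]

lemma flipProb_nonneg {q : ℝ} (hq0 : 0 ≤ q) (hq1 : q ≤ 1) (x y : Fin n → Bool) :
    0 ≤ flipProb q x y :=
  mul_nonneg (pow_nonneg hq0 _) (pow_nonneg (sub_nonneg.2 hq1) _)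

lemma flipProb_eq_prod (q : ℝ) (x y : Fin n → Bool) :
    flipProb q x y = ∏ i, if x i ≠ y i then q else 1 - q := by
  have hcard := card_filter_add_card_filter_not (s := univ) (p := fun i => x i ≠ y i)
  rw [card_univ, Fintype.card_fin] at hcard
  rw [prod_ite, prod_const, prod_const, flipProb, hamming, ← Nat.sub_eq_of_eq_add' hcard.symm]

lemma sum_flipProb (q : ℝ) (x : Fin n → Bool) : ∑ y, flipProb q x y = 1 := by
  simp_rw [flipProb_eq_prod]
  rw [← Fintype.prod_sum (fun i b => if x i ≠ b then q else 1 - q)]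
  refine prod_eq_one fun i _ => ?_
  cases x i <;> simp

lemma pow_min_le_flipProb {q : ℝ} (hq0 : 0 ≤ q) (hq1 : q ≤ 1) (x y : Fin n → Bool) :
    min q (1 - q) ^ n ≤ flipProb q x y := by
  rw [flipProb_eq_prod]
  calc min q (1 - q) ^ n = ∏ _i : Fin n, min q (1 - q) := by simp
    _ ≤ _ := by
      refine prod_le_prod (fun _ _ => le_min hq0 (sub_nonneg.2 hq1)) fun i _ => ?_
      split_ifs
      exacts [min_le_left _ _, min_le_right _ _]

lemma mutProb_eq_sum_filter (q : ℝ) (x : Fin n → Bool) (E : Set (Fin n → Bool)) :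
    mutProb q x E = ∑ y ∈ univ.filter (· ∈ E), flipProb q x y :=
  (sum_filter _ _).symm

lemma mutProb_mono {q : ℝ} (hq0 : 0 ≤ q) (hq1 : q ≤ 1) (x : Fin n → Bool)
    {E F : Set (Fin n → Bool)} (h : E ⊆ F) : mutProb q x E ≤ mutProb q x F := by
  refine sum_le_sum fun y _ => ?_
  by_cases hE : y ∈ E
  · simp [hE, h hE]
  · simp only [hE, if_false]
    split_ifs
    exacts [flipProb_nonneg hq0 hq1 x y, le_rfl]

lemma flipProb_le_mutProb {q : ℝ} (hq0 : 0 ≤ q) (hq1 : q ≤ 1) (x : Fin n → Bool)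
    {E : Set (Fin n → Bool)} {y : Fin n → Bool} (hy : y ∈ E) :
    flipProb q x y ≤ mutProb q x E := by
  rw [mutProb_eq_sum_filter]
  exact single_le_sum (fun y _ => flipProb_nonneg hq0 hq1 x y) (by simpa using hy)

lemma binom_mul_binom_le_mutProb {q : ℝ} (hq0 : 0 ≤ q) (hq1 : q ≤ 1)
    (x : Fin n → Bool) {j i : ℕ} (hj : j ≤ ones x) (hi : i ≤ n - ones x) :
    binom q (ones x) j * binom q (n - ones x) i ≤ mutProb q x (level n (ones x - j + i)) := by
  set P := (onesSet x).powersetCard j ×ˢ (onesSet x)ᶜ.powersetCard i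
  have mem_P : ∀ ST ∈ P, ST.1 ⊆ onesSet x ∧ ST.1.card = j ∧
      Disjoint ST.2 (onesSet x) ∧ ST.2.card = i := by
    intro ST hST
    simp only [P, mem_product, mem_powersetCard, subset_compl_iff_disjoint_right] at hST
    exact ⟨hST.1.1, hST.1.2, hST.2.1, hST.2.2⟩
  have flipProb_eq : ∀ ST ∈ P, flipProb q x (flipSet x (ST.1 ∪ ST.2)) =
      q ^ j * (1 - q) ^ (ones x - j) * (q ^ i * (1 - q) ^ (n - ones x - i)) := by
    rintro ST hST
    obtain ⟨hS, hSj, hT, hTi⟩ := mem_P ST hST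
    rw [flipProb_flipSet, card_union_of_disjoint (hT.mono_right hS).symm, hSj, hTi,
      show n - (j + i) = (ones x - j) + (n - ones x - i) by have := ones_le x; omega]
    ring
  have inj := (flipSet_union_injOn x).mono (s₁ := P) fun ST hST =>
    And.intro (mem_P ST hST).1 (mem_P ST hST).2.2.1
  calc binom q (ones x) j * binom q (n - ones x) i
      = ∑ ST ∈ P, flipProb q x (flipSet x (ST.1 ∪ ST.2)) := by
        rw [sum_congr rfl flipProb_eq, sum_const, card_product, card_powersetCard,
          card_powersetCard, card_onesSet, card_compl_onesSet, nsmul_eq_mul, binom, binom]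
        push_cast
        ring
    _ = ∑ y ∈ P.image fun ST => flipSet x (ST.1 ∪ ST.2), flipProb q x y :=
        (sum_image inj).symm
    _ ≤ mutProb q x (level n (ones x - j + i)) := by
        rw [mutProb_eq_sum_filter]
        refine sum_le_sum_of_subset_of_nonneg ?_ fun y _ _ => flipProb_nonneg hq0 hq1 x y
        simp only [subset_iff, mem_image, mem_filter, mem_univ, true_and]
        rintro _ ⟨ST, hST, rfl⟩
        obtain ⟨hS, hSj, hT, hTi⟩ := mem_P ST hST
        rw [level, Set.mem_ofPred_eq, ones_flipSet_union hS hT, hSj, hTi]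

end Mutation

section Drift

variable {p : ℝ} {n : ℕ}

noncomputable def modeLevel (p : ℝ) (n a : ℕ) : ℕ := a - binomMode p a + binomMode p (n - a)

lemma modeLevel_le (hp0 : 0 ≤ p) (hp1 : p < 1) {a : ℕ} (ha : a ≤ n) :
    modeLevel p n a ≤ n := by
  have := binomMode_le hp0 hp1 a
  have := binomMode_le hp0 hp1 (n - a)
  unfold modeLevel
  omega

lemma abs_modeLevel_sub_half_le (hp0 : 0 ≤ p) (hp1 : p < 1) {a : ℕ} (ha : a ≤ n) :
    |(modeLevel p n a : ℝ) - n / 2| ≤ |1 - 2 * p| * |(a : ℝ) - n / 2| + 1 := by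
  have ha' := binomMode_le_mul hp0 a
  have ha'' := mul_lt_binomMode_add_one p a
  have hna' := binomMode_le_mul hp0 (n - a)
  have hna'' := mul_lt_binomMode_add_one p (n - a)
  rw [Nat.cast_sub ha] at hna' hna''
  have key : (modeLevel p n a : ℝ) - n / 2 = (1 - 2 * p) * ((a : ℝ) - n / 2) +
      (((a + 1) * p - binomMode p a) - ((n - a + 1) * p - binomMode p (n - a))) := by
    rw [modeLevel, Nat.cast_add, Nat.cast_sub (binomMode_le hp0 hp1 a)]
    ring
  rw [key, ← abs_mul]
  refine (abs_add_le _ _).trans (add_le_add_right (abs_le.2 ⟨?_, ?_⟩) _) <;> linarith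

lemma abs_iterate_modeLevel_sub_half_le (hp0 : 0 < p) (hp1 : p < 1) {a : ℕ} (ha : a ≤ n)
    (k : ℕ) : |((modeLevel p n)^[k] a : ℝ) - n / 2| ≤
      |1 - 2 * p| ^ k * (n / 2) + 1 / (1 - |1 - 2 * p|) := by
  have hθ1 : |1 - 2 * p| < 1 := abs_lt.2 ⟨by linarith, by linarith⟩
  have hmaps : Set.MapsTo (modeLevel p n) (Set.Iic n) (Set.Iic n) :=
    fun b hb => modeLevel_le hp0.le hp1 hb
  have h := le_pow_mul_add_of_le_mul_add_one (u := fun k => |((modeLevel p n)^[k] a : ℝ) - n / 2|)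
    (abs_nonneg _) hθ1 (fun k => by
      simp only [Function.iterate_succ_apply']
      exact abs_modeLevel_sub_half_le hp0.le hp1 (hmaps.iterate k ha)) k
  have ha' : |(a : ℝ) - n / 2| ≤ n / 2 := by
    have : (a : ℝ) ≤ n := by exact_mod_cast ha
    exact abs_le.2 ⟨by linarith [a.cast_nonneg (α := ℝ)], by linarith⟩
  refine h.trans (add_le_add_left ?_ _)
  simpa using mul_le_mul_of_nonneg_left ha' (pow_nonneg (abs_nonneg (1 - 2 * p)) k)

lemma mutProb_level_ge (hp0 : 0 < p) (hp1 : p < 1) (x : Fin n → Bool) {c s : ℕ}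
    (hc : |(c : ℝ) - modeLevel p n (ones x)| ≤ s)
    (hs : 3 * s ≤ p * (1 - p) * ((n - ones x : ℕ) + 1)) :
    (1 / 2) ^ s / (n + 1) ^ 2 ≤ mutProb p x (level n c) := by
  set b := ones x
  set m := n - b
  have hb := ones_le x
  have hj := binomMode_le hp0.le hp1 b
  have hsM := le_binomMode hp0 hp1 hs
  have hMs := binomMode_add_le hp0 hp1 hs
  have hcast : (modeLevel p n b : ℝ) = b - binomMode p b + binomMode p m := by
    rw [modeLevel, Nat.cast_add, Nat.cast_sub hj]
  rw [hcast] at hc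
  have hcb : b ≤ c + binomMode p b := by
    have : (b : ℝ) < c + binomMode p b + 1 := by
      have : (s : ℝ) ≤ binomMode p m := by exact_mod_cast hsM
      linarith [neg_abs_le ((c : ℝ) - (b - binomMode p b + binomMode p m))]
    exact Nat.lt_succ_iff.1 (by exact_mod_cast this)
  set i := c + binomMode p b - b
  have hi : |(i : ℝ) - binomMode p m| ≤ s := by
    rw [Nat.cast_sub hcb, Nat.cast_add]
    convert hc using 2
    ring
  have hi_le : i ≤ m := by
    have : (i : ℝ) ≤ binomMode p m + s := by linarith [le_abs_self ((i : ℝ) - binomMode p m)]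
    have : i ≤ binomMode p m + s := by exact_mod_cast this
    omega
  have hbin := binom_mul_binom_le_mutProb hp0.le hp1.le x hj hi_le
  rw [show b - binomMode p b + i = c by omega] at hbin
  refine le_trans ?_ hbin
  have hbn : (b : ℝ) + 1 ≤ n + 1 := by exact_mod_cast Nat.succ_le_succ hb
  have hmn : (m : ℝ) + 1 ≤ n + 1 := by exact_mod_cast Nat.succ_le_succ (Nat.sub_le n b)
  calc (1 / 2 : ℝ) ^ s / (n + 1) ^ 2 ≤ 1 / (b + 1) * ((1 / 2) ^ s / (m + 1)) := by
        rw [div_mul_div_comm, one_mul, sq]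
        gcongr
    _ ≤ binom p b (binomMode p b) * binom p m i :=
        mul_le_mul (one_div_le_binom_binomMode hp0 hp1 b)
          (binom_ge_of_abs_sub_binomMode_le hp0 hp1 hi hs) (by positivity)
          (binom_nonneg hp0.le hp1.le _ _)

lemma one_div_sq_le_mutProb_level_modeLevel (hp0 : 0 < p) (hp1 : p < 1) (x : Fin n → Bool) :
    1 / (n + 1) ^ 2 ≤ mutProb p x (level n (modeLevel p n (ones x))) := by
  simpa using mutProb_level_ge hp0 hp1 x (s := 0) (by simp)
    (by simpa using mul_nonneg (mul_nonneg hp0.le (sub_nonneg.2 hp1.le)) (by positivity))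

lemma abs_half_sub_modeLevel_iterate_le (hp0 : 0 < p) (hp1 : p < 1) {a : ℕ} (ha : a ≤ n)
    (k : ℕ) : |((n / 2 : ℕ) : ℝ) - modeLevel p n ((modeLevel p n)^[k] a)| ≤
      |1 - 2 * p| ^ k * (n / 2) + 1 / (1 - |1 - 2 * p|) + 1 / 2 := by
  have hnext := abs_iterate_modeLevel_sub_half_le hp0 hp1 ha (k + 1)
  rw [Function.iterate_succ_apply'] at hnext
  have hθk : |1 - 2 * p| ^ (k + 1) ≤ |1 - 2 * p| ^ k :=
    pow_le_pow_of_le_one (abs_nonneg _) (abs_le.2 ⟨by linarith, by linarith⟩) (Nat.le_succ k)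
  have := abs_sub_le ((n / 2 : ℕ) : ℝ) (n / 2) (modeLevel p n ((modeLevel p n)^[k] a))
  rw [abs_sub_comm (n / 2 : ℝ)] at this
  nlinarith [abs_natCast_div_two_sub_le n,
    mul_le_mul_of_nonneg_right hθk (by positivity : (0 : ℝ) ≤ n / 2)]

end Drift

section KilledChain

variable {n : ℕ} {q : ℝ} {A : Set (Fin n → Bool)}

noncomputable def survivalProb (q : ℝ) (A : Set (Fin n → Bool)) (z : Fin n → Bool) (t : ℕ) :
    ℝ :=
  ∑ y, pureKilled q A z t y

lemma pureKilled_nonneg (hq0 : 0 ≤ q) (hq1 : q ≤ 1) (x0 : Fin n → Bool) :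
    ∀ t y, 0 ≤ pureKilled q A x0 t y
  | 0, y => by unfold pureKilled; positivity
  | t + 1, y => by
    unfold pureKilled
    split_ifs
    exacts [le_rfl, sum_nonneg fun x _ =>
      mul_nonneg (pureKilled_nonneg hq0 hq1 x0 t x) (flipProb_nonneg hq0 hq1 x y)]

lemma pureKilled_add (x0 : Fin n → Bool) (s : ℕ) :
    ∀ t y, pureKilled q A x0 (s + t) y = ∑ z, pureKilled q A x0 s z * pureKilled q A z t y
  | 0, y => by simp [pureKilled]
  | t + 1, y => by
    rw [← add_assoc, pureKilled]
    split_ifs with hy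
    · simp [pureKilled, hy]
    · simp_rw [pureKilled_add x0 s t, sum_mul, pureKilled, if_neg hy, mul_sum, mul_assoc]
      exact sum_comm

lemma survivalProb_add (x0 : Fin n → Bool) (s t : ℕ) :
    survivalProb q A x0 (s + t) = ∑ z, pureKilled q A x0 s z * survivalProb q A z t := by
  simp_rw [survivalProb, pureKilled_add x0 s t, mul_sum]
  exact sum_comm

lemma survivalProb_one_add (z : Fin n → Bool) (t : ℕ) :
    survivalProb q A z (1 + t) =
      ∑ w, if w ∈ A then 0 else flipProb q z w * survivalProb q A w t := by
  rw [survivalProb_add]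
  refine sum_congr rfl fun w _ => ?_
  simp only [pureKilled]
  split_ifs <;> simp [*]

lemma survivalProb_le_one (hq0 : 0 ≤ q) (hq1 : q ≤ 1) : ∀ t (z : Fin n → Bool),
    survivalProb q A z t ≤ 1
  | 0, z => by simp [survivalProb, pureKilled]
  | t + 1, z => by
    rw [add_comm, survivalProb_one_add, ← sum_flipProb q z]
    refine sum_le_sum fun w _ => ?_
    split_ifs
    · exact flipProb_nonneg hq0 hq1 z w
    · exact mul_le_of_le_one_right (flipProb_nonneg hq0 hq1 z w) (survivalProb_le_one hq0 hq1 t w)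

lemma survivalProb_one_add_le (hq0 : 0 ≤ q) (hq1 : q ≤ 1) {B : Set (Fin n → Bool)} {c : ℝ}
    (hc1 : c ≤ 1) {t : ℕ} (hB : ∀ w ∈ B, w ∉ A → survivalProb q A w t ≤ 1 - c)
    (z : Fin n → Bool) : survivalProb q A z (1 + t) ≤ 1 - c * mutProb q z B := by
  rw [survivalProb_one_add, mutProb, mul_sum, ← sum_flipProb q z, ← sum_sub_distrib]
  refine sum_le_sum fun w _ => ?_
  have hf := flipProb_nonneg hq0 hq1 z w
  have hsurv := survivalProb_le_one (A := A) hq0 hq1 t w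
  by_cases hwB : w ∈ B <;> by_cases hwA : w ∈ A <;> simp only [hwA, hwB, if_true, if_false]
  · nlinarith
  · nlinarith [hB w hwB hwA]
  · simpa using hf
  · nlinarith

lemma survivalProb_one_le (hq0 : 0 ≤ q) (hq1 : q ≤ 1) (z : Fin n → Bool) :
    survivalProb q A z 1 ≤ 1 - mutProb q z A := by
  simpa using survivalProb_one_add_le hq0 hq1 (B := A) le_rfl (t := 0)
    (fun _ hw hw' => absurd hw hw') z

lemma survivalProb_le_of_chain (hq0 : 0 ≤ q) (hq1 : q ≤ 1) {ε ε' : ℝ} (hε0 : 0 ≤ ε)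
    (hε1 : ε ≤ 1) (hε'0 : 0 ≤ ε') (hε'1 : ε' ≤ 1) :
    ∀ (K : ℕ) (B : ℕ → Set (Fin n → Bool)),
      (∀ i < K, ∀ x ∈ B i, ε ≤ mutProb q x (B (i + 1))) → (∀ x ∈ B K, ε' ≤ mutProb q x A) →
      ∀ z ∈ B 0, survivalProb q A z (K + 1) ≤ 1 - ε ^ K * ε'
  | 0, B, _, hlast, z, hz => by
    simpa using (survivalProb_one_le hq0 hq1 z).trans (by linarith [hlast z hz])
  | K + 1, B, hstep, hlast, z, hz => by
    have ih := survivalProb_le_of_chain hq0 hq1 hε0 hε1 hε'0 hε'1 K (fun i => B (i + 1))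
      (fun i hi => hstep (i + 1) (by omega)) hlast
    have hc1 : ε ^ K * ε' ≤ 1 := mul_le_one₀ (pow_le_one₀ hε0 hε1) hε'0 hε'1
    calc survivalProb q A z (K + 1 + 1) = survivalProb q A z (1 + (K + 1)) := by rw [add_comm]
      _ ≤ 1 - ε ^ K * ε' * mutProb q z (B 1) :=
        survivalProb_one_add_le hq0 hq1 hc1 (fun w hw _ => ih w hw) z
      _ ≤ 1 - ε ^ K * ε' * ε := by gcongr; exact hstep 0 (by omega) z hz
      _ = 1 - ε ^ (K + 1) * ε' := by ring

lemma pureHitTime_le_of_survivalProb_le (hq0 : 0 ≤ q) (hq1 : q ≤ 1) {K : ℕ} {δ : ℝ}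
    (hδ : 0 < δ) (h : ∀ z, survivalProb q A z K ≤ 1 - δ) (x0 : Fin n → Bool) :
    pureHitTime q A x0 ≤ K / δ := by
  have hnonneg : ∀ t, 0 ≤ survivalProb q A x0 t :=
    fun t => sum_nonneg fun y _ => pureKilled_nonneg hq0 hq1 x0 t y
  have decay : ∀ t, survivalProb q A x0 (K + t) ≤ (1 - δ) * survivalProb q A x0 t := by
    intro t
    rw [add_comm, survivalProb_add, survivalProb, mul_sum]
    refine sum_le_sum fun z _ => ?_
    rw [mul_comm (1 - δ)]
    exact mul_le_mul_of_nonneg_left (h z) (pureKilled_nonneg hq0 hq1 x0 t z)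
  refine Real.tsum_le_of_sum_range_le (f := survivalProb q A x0) hnonneg fun T => ?_
  set S := ∑ t ∈ range T, survivalProb q A x0 t
  have : S ≤ K + (1 - δ) * S := calc
    S ≤ ∑ t ∈ range (K + T), survivalProb q A x0 t :=
        sum_le_sum_of_subset_of_nonneg (range_mono le_add_self) fun t _ _ => hnonneg t
    _ = ∑ t ∈ range K, survivalProb q A x0 t + ∑ t ∈ range T, survivalProb q A x0 (K + t) :=
        sum_range_add _ _ _
    _ ≤ ∑ t ∈ range K, 1 + ∑ t ∈ range T, (1 - δ) * survivalProb q A x0 t :=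
        add_le_add (sum_le_sum fun t _ => survivalProb_le_one hq0 hq1 t x0)
          (sum_le_sum fun t _ => decay t)
    _ = K + (1 - δ) * S := by simp [S, mul_sum]
  rw [le_div_iff₀ hδ]
  linarith

end KilledChain

section Stones

variable {p : ℝ}

lemma s_eq (p : ℝ) (k : ℕ) : s p k = 1 / 2 + (1 - 2 * p) ^ k / 2 := by
  induction k with
  | zero => norm_num [s]
  | succ k ih =>
    rw [s, Function.iterate_succ_apply', ← s, ih, fp, pow_succ]
    ring

lemma floor_natCast_div_two (n : ℕ) : ⌊(n : ℝ) / 2⌋ = ((n / 2 : ℕ) : ℤ) := by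
  have := Int.floor_div_natCast (n : ℝ) 2
  push_cast at this
  rw [this, Int.floor_natCast]
  omega

lemma floor_mul_s_eq_floor_half (hp0 : 0 < p) (hp1 : p < 1) (n : ℕ) :
    ∃ k, 1 ≤ k ∧ ⌊(n : ℝ) * s p k⌋ = ⌊(n : ℝ) / 2⌋ := by
  have hsq : (1 - 2 * p) ^ 2 < 1 := by nlinarith
  obtain ⟨t, ht⟩ := exists_pow_lt_of_lt_one (by positivity : (0 : ℝ) < 1 / (n + 1)) hsq
  refine ⟨2 * (t + 1), by omega, ?_⟩
  have hη0 : 0 ≤ (1 - 2 * p) ^ (2 * (t + 1)) := by rw [pow_mul]; positivity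
  have hη : (n + 1) * (1 - 2 * p) ^ (2 * (t + 1)) < 1 := by
    rw [pow_mul, pow_succ, ← lt_div_iff₀' (by positivity)]
    exact (mul_le_of_le_one_right (by positivity) hsq.le).trans_lt ht
  rw [floor_natCast_div_two, Int.floor_eq_iff, s_eq, Int.cast_natCast]
  generalize (1 - 2 * p) ^ (2 * (t + 1)) = η at hη0 hη
  have h1 : ((n / 2 : ℕ) : ℝ) * 2 ≤ n := by exact_mod_cast Nat.div_mul_le_self n 2
  have h2 := (abs_le.1 (abs_natCast_div_two_sub_le n)).1
  constructor <;> nlinarith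

lemma level_half_subset_stones (hp0 : 0 < p) (hp1 : p < 1) (n : ℕ) :
    level n (n / 2) ⊆ stones p n := by
  intro y hy
  have hN : 1 ≤ NN p n ∧ ⌊(n : ℝ) * s p (NN p n)⌋ = ⌊(n : ℝ) / 2⌋ :=
    Nat.sInf_mem (floor_mul_s_eq_floor_half hp0 hp1 n)
  refine ⟨NN p n, hN.1, le_rfl, ?_⟩
  rw [inStone, hN.2, floor_natCast_div_two, hy]

lemma level_nonempty {n c : ℕ} (hc : c ≤ n) : (level n c).Nonempty := by
  obtain ⟨D, -, hD⟩ := exists_subset_card_eq (s := (univ : Finset (Fin n))) (by simpa using hc)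
  exact ⟨fun i => decide (i ∈ D), by simpa [level, ones] using hD⟩

end Stones

section HittingTime

variable {p : ℝ}

lemma pureHitTime_stones_le_pow (hp0 : 0 < p) (hp1 : p < 1) (n : ℕ) (x0 : Fin n → Bool) :
    pureHitTime p (stones p n) x0 ≤ (1 / min p (1 - p)) ^ n := by
  have hβ : 0 < min p (1 - p) := lt_min hp0 (sub_pos.2 hp1)
  obtain ⟨y, hy⟩ := level_nonempty (Nat.div_le_self n 2)
  have h := pureHitTime_le_of_survivalProb_le hp0.le hp1.le (K := 1) (pow_pos hβ n)
    (fun z => (survivalProb_one_le hp0.le hp1.le z).trans (sub_le_sub_left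
      ((pow_min_le_flipProb hp0.le hp1.le z y).trans (flipProb_le_mutProb hp0.le hp1.le z
        (level_half_subset_stones hp0 hp1 n hy))) 1)) x0
  rwa [Nat.cast_one, ← one_div_pow] at h

lemma mutProb_stones_ge (hp0 : 0 < p) (hp1 : p < 1) {K n a : ℕ}
    (hK : |1 - 2 * p| ^ K ≤ p * (1 - p) / 12)
    (hn : 8 * (4 / (1 - |1 - 2 * p|) + 5) ≤ p * (1 - p) * n) (ha : a ≤ n)
    {x : Fin n → Bool} (hx : ones x = (modeLevel p n)^[K] a) :
    1 / ((n + 1) ^ 2 * 2 ^ (|1 - 2 * p| ^ K * n + 1 / (1 - |1 - 2 * p|) + 2)) ≤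
      mutProb p x (stones p n) := by
  have hb := abs_iterate_modeLevel_sub_half_le hp0 hp1 ha K
  have hdist := abs_half_sub_modeLevel_iterate_le hp0 hp1 ha K
  rw [← hx] at hb hdist
  rw [← mul_one_div] at hn
  set θ := |1 - 2 * p|
  set R := 1 / (1 - θ)
  have hθ1 : θ ≤ 1 := abs_le.2 ⟨by linarith, by linarith⟩
  set b := ones x
  set e := ⌈|((n / 2 : ℕ) : ℝ) - modeLevel p n b|⌉₊
  have he : (e : ℝ) ≤ θ ^ K * (n / 2) + R + 3 / 2 := by
    linarith [Nat.ceil_lt_add_one (abs_nonneg (((n / 2 : ℕ) : ℝ) - modeLevel p n b))]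
  have hs : 3 * (e : ℝ) ≤ p * (1 - p) * ((n - b : ℕ) + 1) := by
    have hP0 : 0 ≤ p * (1 - p) := mul_nonneg hp0.le (sub_nonneg.2 hp1.le)
    have hP : p * (1 - p) ≤ 1 / 4 := by nlinarith [sq_nonneg (p - 1 / 2)]
    have hθn : 0 ≤ θ ^ K * n := by positivity
    have hnb : (n : ℝ) / 2 - θ ^ K * (n / 2) - R ≤ (n - b : ℕ) + 1 := by
      rw [Nat.cast_sub (ones_le x)]
      linarith [le_abs_self ((b : ℝ) - n / 2)]
    have hR : 0 ≤ R := one_div_nonneg.2 (sub_nonneg.2 hθ1)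
    nlinarith [mul_le_mul_of_nonneg_right hK (n.cast_nonneg : (0 : ℝ) ≤ n),
      mul_le_mul_of_nonneg_right hP hθn, mul_le_mul_of_nonneg_left hnb hP0,
      mul_le_mul_of_nonneg_right hP hR]
  calc (1 : ℝ) / ((n + 1) ^ 2 * (2 : ℝ) ^ (θ ^ K * n + R + 2))
        ≤ (1 / 2) ^ e / (n + 1) ^ 2 := by
        rw [one_div_pow, div_div, ← one_div_mul_one_div, one_div_mul_one_div, mul_comm]
        gcongr
        rw [← Real.rpow_natCast]
        exact Real.rpow_le_rpow_of_exponent_le one_le_two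
          (by linarith [(by positivity : 0 ≤ θ ^ K * n)])
    _ ≤ mutProb p x (level n (n / 2)) := mutProb_level_ge hp0 hp1 x (Nat.le_ceil _) hs
    _ ≤ mutProb p x (stones p n) :=
        mutProb_mono hp0.le hp1.le x (level_half_subset_stones hp0 hp1 n)

lemma pureHitTime_stones_le (hp0 : 0 < p) (hp1 : p < 1) {K n : ℕ}
    (hK : |1 - 2 * p| ^ K ≤ p * (1 - p) / 12)
    (hn : 8 * (4 / (1 - |1 - 2 * p|) + 5) ≤ p * (1 - p) * n) (x0 : Fin n → Bool) :
    pureHitTime p (stones p n) x0 ≤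
      (K + 1) * ((n + 1) ^ (2 * (K + 1)) *
        2 ^ (|1 - 2 * p| ^ K * n + 1 / (1 - |1 - 2 * p|) + 2)) := by
  set E := |1 - 2 * p| ^ K * n + 1 / (1 - |1 - 2 * p|) + 2
  have hE : 1 ≤ (2 : ℝ) ^ E := Real.one_le_rpow one_le_two (by
    have : 0 ≤ 1 / (1 - |1 - 2 * p|) :=
      one_div_nonneg.2 (sub_nonneg.2 (abs_le.2 ⟨by linarith, by linarith⟩))
    positivity)
  have hn1 : 1 ≤ ((n : ℝ) + 1) ^ 2 := one_le_pow₀ (by linarith [n.cast_nonneg (α := ℝ)])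
  have hε1 : 1 / ((n : ℝ) + 1) ^ 2 ≤ 1 := div_le_one_of_le₀ hn1 (by positivity)
  have hε'1 : 1 / (((n : ℝ) + 1) ^ 2 * 2 ^ E) ≤ 1 :=
    div_le_one_of_le₀ (one_le_mul_of_one_le_of_one_le hn1 hE) (by positivity)
  have hsurv : ∀ z, survivalProb p (stones p n) z (K + 1) ≤
      1 - (1 / ((n : ℝ) + 1) ^ 2) ^ K * (1 / (((n : ℝ) + 1) ^ 2 * 2 ^ E)) := fun z =>
    survivalProb_le_of_chain hp0.le hp1.le (by positivity) hε1 (by positivity) hε'1 K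
      (fun i => level n ((modeLevel p n)^[i] (ones z)))
      (fun i _ x (hx : ones x = _) => by
        rw [Function.iterate_succ_apply', ← hx]
        exact one_div_sq_le_mutProb_level_modeLevel hp0 hp1 x)
      (fun x hx => mutProb_stones_ge hp0 hp1 hK hn (ones_le z) hx) z rfl
  have hδ : (1 / ((n : ℝ) + 1) ^ 2) ^ K * (1 / (((n : ℝ) + 1) ^ 2 * 2 ^ E)) =
      1 / (((n : ℝ) + 1) ^ (2 * (K + 1)) * 2 ^ E) := by
    rw [one_div_pow, div_mul_div_comm, one_mul, ← mul_assoc, ← pow_mul, mul_add, mul_one,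
      pow_add]
  rw [hδ] at hsurv
  refine (pureHitTime_le_of_survivalProb_le hp0.le hp1.le (by positivity) hsurv x0).trans_eq ?_
  rw [one_div, div_inv_eq_mul]
  push_cast
  ring

end HittingTime

lemma one_lt_one_div_rpow_mul_rpow {p : ℝ} (hp0 : 0 < p) (hp1 : p < 1) :
    1 < 1 / (p ^ p * (1 - p) ^ (1 - p)) := by
  have h1 : p ^ p < 1 := Real.rpow_lt_one hp0.le hp1 hp0
  have h2 : (1 - p) ^ (1 - p) < 1 := Real.rpow_lt_one (by linarith) (by linarith) (by linarith)
  have h2' : 0 < (1 - p) ^ (1 - p) := Real.rpow_pos_of_pos (by linarith) _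
  exact one_lt_one_div (mul_pos (Real.rpow_pos_of_pos hp0 p) h2')
    (mul_lt_one_of_nonneg_of_lt_one_left (Real.rpow_pos_of_pos hp0 p).le h1 h2.le)

lemma eventually_add_one_pow_mul_pow_le {ρ α : ℝ} (hρ : 0 ≤ ρ) (hρα : ρ < α) (k : ℕ) :
    ∀ᶠ n : ℕ in atTop, ((n : ℝ) + 1) ^ k * ρ ^ n ≤ 2 ^ k * α ^ n := by
  have h := (isLittleO_pow_const_mul_const_pow_const_pow_of_norm_lt (R := ℝ) k
    (by rwa [Real.norm_of_nonneg hρ])).bound one_pos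
  filter_upwards [h, eventually_ge_atTop 1] with n hn hn1
  have hα : 0 ≤ α := hρ.trans hρα.le
  rw [Real.norm_of_nonneg (by positivity), Real.norm_of_nonneg (by positivity), one_mul] at hn
  have : (n : ℝ) + 1 ≤ 2 * n := by
    have : (1 : ℝ) ≤ n := by exact_mod_cast hn1
    linarith
  calc ((n : ℝ) + 1) ^ k * ρ ^ n ≤ (2 * n) ^ k * ρ ^ n := by gcongr
    _ = 2 ^ k * ((n : ℝ) ^ k * ρ ^ n) := by ring
    _ ≤ 2 ^ k * α ^ n := by gcongr

lemma exists_forall_le_mul_pow {ι : ℕ → Type*} {f : ∀ n, ι n → ℝ} {α β C : ℝ}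
    (hα : 1 ≤ α) (hβ : 1 ≤ β) (hfβ : ∀ n x, f n x ≤ β ^ n)
    (hfC : ∀ᶠ n in atTop, ∀ x, f n x ≤ C * α ^ n) :
    ∃ C', ∀ n x, f n x ≤ C' * α ^ n := by
  obtain ⟨N, hN⟩ := eventually_atTop.1 hfC
  refine ⟨max C (β ^ N), fun n x => ?_⟩
  rcases le_total N n with h | h
  · exact (hN n h x).trans (mul_le_mul_of_nonneg_right (le_max_left _ _) (by positivity))
  · calc f n x ≤ β ^ n := hfβ n x
      _ ≤ β ^ N := pow_le_pow_right₀ hβ h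
      _ ≤ max C (β ^ N) := le_max_right _ _
      _ ≤ max C (β ^ N) * α ^ n :=
        le_mul_of_one_le_right (zero_le_one.trans ((one_le_pow₀ hβ).trans (le_max_right _ _)))
          (one_le_pow₀ hα)

theorem pure_chain_hits_stones_general (p : ℝ) (hp : p ∈ Set.Ioo (0 : ℝ) 1) :
    ∃ C : ℝ, ∀ n : ℕ, ∀ x0 : Fin n → Bool,
      pureHitTime p (stones p n) x0 ≤ C * (1 / (p ^ p * (1 - p) ^ (1 - p))) ^ n := by
  obtain ⟨hp0, hp1⟩ := hp
  have hα := one_lt_one_div_rpow_mul_rpow hp0 hp1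
  set α := 1 / (p ^ p * (1 - p) ^ (1 - p))
  set θ := |1 - 2 * p|
  have hP : 0 < p * (1 - p) := mul_pos hp0 (sub_pos.2 hp1)
  obtain ⟨K, hK⟩ := exists_pow_lt_of_lt_one (lt_min (by positivity : 0 < p * (1 - p) / 12)
    (Real.logb_pos one_lt_two hα)) (abs_lt.2 ⟨by linarith, by linarith⟩ : θ < 1)
  have hρ : (2 : ℝ) ^ (θ ^ K) < α := by
    calc (2 : ℝ) ^ (θ ^ K) < 2 ^ Real.logb 2 α :=
          Real.rpow_lt_rpow_of_exponent_lt one_lt_two (hK.trans_le (min_le_right _ _))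
      _ = α := Real.rpow_logb two_pos (by norm_num) (by linarith)
  have hlarge : ∀ᶠ n : ℕ in atTop, 8 * (4 / (1 - θ) + 5) ≤ p * (1 - p) * n :=
    (tendsto_natCast_atTop_atTop.const_mul_atTop hP).eventually_ge_atTop _
  refine exists_forall_le_mul_pow (C := (K + 1) * 2 ^ (1 / (1 - θ) + 2) * 2 ^ (2 * (K + 1)))
    hα.le (one_le_one_div (lt_min hp0 (sub_pos.2 hp1)) ((min_le_left _ _).trans hp1.le))
    (pureHitTime_stones_le_pow hp0 hp1) ?_
  filter_upwards [hlarge, eventually_add_one_pow_mul_pow_le (by positivity) hρ (2 * (K + 1))]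
    with n hn hrate x0
  calc pureHitTime p (stones p n) x0
      ≤ (K + 1) * ((n + 1) ^ (2 * (K + 1)) * 2 ^ (θ ^ K * n + 1 / (1 - θ) + 2)) :=
        pureHitTime_stones_le hp0 hp1 (hK.le.trans (min_le_left _ _)) hn x0
    _ = (K + 1) * 2 ^ (1 / (1 - θ) + 2) * ((n + 1) ^ (2 * (K + 1)) * (2 ^ θ ^ K) ^ n) := by
        rw [add_assoc, Real.rpow_add two_pos, Real.rpow_mul_natCast zero_le_two]
        ring
    _ ≤ (K + 1) * 2 ^ (1 / (1 - θ) + 2) * (2 ^ (2 * (K + 1)) * α ^ n) := by gcongr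
    _ = (K + 1) * 2 ^ (1 / (1 - θ) + 2) * 2 ^ (2 * (K + 1)) * α ^ n := by ring

/-- For fixed `p ∈ (0,1)`, `p ≠ 1/2`, and `α = 1/(p^p (1-p)^(1-p))`, the pure
mutation chain (every offspring accepted) hits the union of the stepping stones in expected
time at most `C · α^n`, uniformly over all `n` and all starting states. -/
theorem pure_chain_hits_stones (p : ℝ) (hp : p ∈ Set.Ioo (0 : ℝ) 1) (hp2 : p ≠ 1/2) :
    ∃ C : ℝ, ∀ n : ℕ, ∀ x0 : Fin n → Bool,
      pureHitTime p (stones p n) x0 ≤ C * (1 / (p ^ p * (1 - p) ^ (1 - p))) ^ n :=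
  pure_chain_hits_stones_general p hp

end DSS
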